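/- arXiv:1804.02531 — 2 statements merged into one kernel-verified Lean document; each statement's English description precedes it below -/
import Mathlib

section
/- For all integers n ≥ 2 and m ≥ 1, the infimum ξ_{n,m} = inf over L ∈ ℒ_{n,m} of ρ_{n,L} satisfies ξ_{n,m} ≥ q_{n,m} · ς_{n,m}^{m−1}; in particular ξ_{n,m} > 0. -/
open Finset Filter Topology

/-- A code `(v 0, …, v (m-1))` is *uniquely decodable* if any two nonempty sequences of
indices whose corresponding concatenations of code words coincide are equal. -/
def IsUDCode {X : Type*} {m : ℕ} (v : Fin m → List X) : Prop :=
  ∀ s t : List (Fin m), s ≠ [] → t ≠ [] →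
    (s.map v).flatten = (t.map v).flatten → s = t

/-- A *prefix code*: an injective sequence of nonempty words where no code word
is a prefix of another. -/
def IsPrefixCode {X : Type*} {m : ℕ} (v : Fin m → List X) : Prop :=
  Function.Injective v ∧ (∀ i, v i ≠ []) ∧ ∀ i j, i ≠ j → ¬ v i <+: v j

/-- The set of uniquely decodable codes over an `n`-letter alphabet with
length distribution `L`. -/
def UD (n : ℕ) {m : ℕ} (L : Fin m → ℕ) : Set (Fin m → List (Fin n)) :=
  {v | (∀ i, (v i).length = L i) ∧ IsUDCode v}

/-- The set of prefix codes over an `n`-letter alphabet with length distribution `L`. -/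
def PR (n : ℕ) {m : ℕ} (L : Fin m → ℕ) : Set (Fin m → List (Fin n)) :=
  {v | (∀ i, (v i).length = L i) ∧ IsPrefixCode v}

/-- `ρ_{n,L} = |PR_n(L)| / |UD_n(L)|`. -/
noncomputable def rho (n : ℕ) {m : ℕ} (L : Fin m → ℕ) : ℝ :=
  ((PR n L).ncard : ℝ) / ((UD n L).ncard : ℝ)

/-- `ξ_{n,m} = inf_{L ∈ ℒ_{n,m}} ρ_{n,L}`. -/
noncomputable def xi (n m : ℕ) : ℝ :=
  sInf {r : ℝ | ∃ L : Fin m → ℕ, (∀ i, 1 ≤ L i) ∧ (UD n L).Nonempty ∧ r = rho n L}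

/-- `ς_{n,m} = (n - (m mod (n-1))) / n^{⌊m/(n-1)⌋ + 1}`. -/
noncomputable def varsigma (n m : ℕ) : ℝ :=
  ((n : ℝ) - (m % (n - 1) : ℕ)) / (n : ℝ) ^ (m / (n - 1) + 1)

/-- `q_{n,m}`: `1` if `n ≥ m`, and `(m-1)!/(m-1)^{m-1}` if `n < m`. -/
noncomputable def qnm (n m : ℕ) : ℝ :=
  if m ≤ n then 1 else (Nat.factorial (m - 1) : ℝ) / ((m - 1 : ℕ) : ℝ) ^ (m - 1)

/-- `ϖ_{n,m} = ∏_{i=1}^{m-1} (1 - (1 - n^{-i})/(n-1))`. -/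
noncomputable def varpi (n m : ℕ) : ℝ :=
  ∏ i ∈ Finset.Icc 1 (m - 1), (1 - (1 - 1 / (n : ℝ) ^ i) / ((n : ℝ) - 1))

/-- `η_{n,m} = 1 + Σ_{i=1}^{m-1} C(m-1,i)/(n^i - 1)`. -/
noncomputable def eta (n m : ℕ) : ℝ :=
  1 + ∑ i ∈ Finset.Icc 1 (m - 1), ((m - 1).choose i : ℝ) / ((n : ℝ) ^ i - 1)

/-!
By the Kraft–McMillan inequality a uniquely decodable code with length distribution `L` satisfies
`∑ n^{-L_i} ≤ 1`, and trivially `|UD_n(L)| ≤ ∏ n^{L_i}`. After sorting `L` increasingly, a prefix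
code is built word by word: the `i`-th word, of length `L_i`, only has to avoid the at most
`∑_{j<i} n^{L_i - L_j}` words having an earlier code word as a prefix, so
`|PR_n(L)| ≥ ∏ n^{L_i} (1 - ∑_{j<i} n^{-L_j})`.

A sum of `c` powers `n^{-b}` that is `< 1` is at most `1 - ς_{n,c}`. Remove the term with the
largest exponent `B`: either `n^{-B}` is at most the drop `ς_{n,c-1} - ς_{n,c}`, or `B` is small,
and then, the sum being a multiple of `n^{-B}`, it is at most `1 - n^{-B} ≤ 1 - ς_{n,c}`.
So every factor with `i ≥ 1` is at least `ς_{n,m}`, whence `ρ_{n,L} ≥ ς_{n,m}^{m-1}`; finally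
`q_{n,m} ≤ 1`.
-/

noncomputable def wordsOfLength (α : Type*) [Fintype α] (ℓ : ℕ) : Finset (List α) :=
  (univ : Finset (Fin ℓ → α)).map ⟨List.ofFn, List.ofFn_injective⟩

section Words

variable {α : Type*} [Fintype α]

@[simp]
lemma mem_wordsOfLength {ℓ : ℕ} {w : List α} : w ∈ wordsOfLength α ℓ ↔ w.length = ℓ := by
  simp only [wordsOfLength, Finset.mem_map, mem_univ, true_and, Function.Embedding.coeFn_mk]
  constructor
  · rintro ⟨f, rfl⟩
    exact List.length_ofFn
  · rintro rfl
    exact ⟨w.get, List.ofFn_get w⟩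

lemma card_wordsOfLength (ℓ : ℕ) : #(wordsOfLength α ℓ) = Fintype.card α ^ ℓ := by
  rw [wordsOfLength, card_map, card_univ, Fintype.card_fun, Fintype.card_fin]

lemma card_filter_prefix_le [DecidableEq α] (p : List α) (ℓ : ℕ) :
    #{w ∈ wordsOfLength α ℓ | p <+: w} ≤ Fintype.card α ^ (ℓ - p.length) := by
  rw [← card_wordsOfLength]
  refine card_le_card_of_injOn (List.drop p.length) (fun w hw => ?_) (fun w hw w' hw' h => ?_)
  · simp_all
  · obtain ⟨t, rfl⟩ := (mem_filter.1 hw).2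
    obtain ⟨t', rfl⟩ := (mem_filter.1 hw').2
    simp only [List.drop_left] at h
    rw [h]

open Classical in
noncomputable def wordsAvoidingPrefixes {ι : Type*} [Fintype ι] (u : ι → List α) (ℓ : ℕ) :
    Finset (List α) :=
  {w ∈ wordsOfLength α ℓ | ∀ j, ¬ u j <+: w}

lemma mem_wordsAvoidingPrefixes {ι : Type*} [Fintype ι] {u : ι → List α} {ℓ : ℕ} {w : List α} :
    w ∈ wordsAvoidingPrefixes u ℓ ↔ w.length = ℓ ∧ ∀ j, ¬ u j <+: w := by
  simp [wordsAvoidingPrefixes]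

lemma pow_le_card_wordsAvoidingPrefixes_add {ι : Type*} [Fintype ι] (u : ι → List α) (ℓ : ℕ) :
    Fintype.card α ^ ℓ ≤
      #(wordsAvoidingPrefixes u ℓ) + ∑ j, Fintype.card α ^ (ℓ - (u j).length) := by
  classical
  rw [← card_wordsOfLength, ← card_filter_add_card_filter_not (fun w => ∀ j, ¬ u j <+: w),
    wordsAvoidingPrefixes]
  gcongr
  calc #{w ∈ wordsOfLength α ℓ | ¬ ∀ j, ¬ u j <+: w}
      ≤ #(univ.biUnion fun j => {w ∈ wordsOfLength α ℓ | u j <+: w}) :=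
        card_le_card fun w hw => by simpa using hw
    _ ≤ ∑ j, #{w ∈ wordsOfLength α ℓ | u j <+: w} := card_biUnion_le
    _ ≤ ∑ j, Fintype.card α ^ (ℓ - (u j).length) :=
        sum_le_sum fun j _ => card_filter_prefix_le (u j) ℓ

end Words

section Codes

variable {X : Type*} {m : ℕ}

lemma isPrefixCode_of_forall_not_prefix {v : Fin m → List X} (hne : ∀ i, v i ≠ [])
    (hpre : ∀ i j, i ≠ j → ¬ v i <+: v j) : IsPrefixCode v :=
  ⟨fun i j h => by_contra fun hij => hpre i j hij (h ▸ List.prefix_refl _), hne, hpre⟩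

lemma IsPrefixCode.comp {k : ℕ} {v : Fin m → List X} (hv : IsPrefixCode v) {f : Fin k → Fin m}
    (hf : Function.Injective f) : IsPrefixCode (v ∘ f) :=
  ⟨hv.1.comp hf, fun i => hv.2.1 (f i), fun i j hij => hv.2.2 (f i) (f j) (hf.ne hij)⟩

lemma IsPrefixCode.snoc {u : Fin m → List X} {w : List X} (hu : IsPrefixCode u) (hw : w ≠ [])
    (hlen : ∀ j, (u j).length ≤ w.length) (hpre : ∀ j, ¬ u j <+: w) :
    IsPrefixCode (Fin.snoc u w : Fin (m + 1) → List X) := by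
  refine isPrefixCode_of_forall_not_prefix (fun i => ?_) (fun i j hij => ?_)
  · cases i using Fin.lastCases <;> simp [hw, hu.2.1]
  · cases i using Fin.lastCases with
    | last =>
      cases j using Fin.lastCases with
      | last => exact absurd rfl hij
      | cast j =>
        simp only [Fin.snoc_last, Fin.snoc_castSucc]
        exact fun h => hpre j (h.eq_of_length_le (hlen j) ▸ List.prefix_refl _)
    | cast i =>
      cases j using Fin.lastCases with
      | last => simpa using hpre i
      | cast j => simpa using hu.2.2 i j fun h => hij (congrArg _ h)

lemma IsPrefixCode.injective_flatten_map {v : Fin m → List X} (hv : IsPrefixCode v) :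
    Function.Injective fun s : List (Fin m) => (s.map v).flatten := by
  intro s
  induction s with
  | nil =>
    rintro (_ | ⟨j, t⟩) h
    · rfl
    · exact absurd (List.append_eq_nil_iff.1 h.symm).1 (hv.2.1 j)
  | cons i s ih =>
    rintro (_ | ⟨j, t⟩) h
    · exact absurd (List.append_eq_nil_iff.1 h).1 (hv.2.1 i)
    · simp only [List.map_cons, List.flatten_cons] at h
      obtain rfl : i = j := by
        by_contra hij
        rcases List.prefix_or_prefix_of_prefix (h ▸ List.prefix_append _ _)
          (List.prefix_append _ _) with hp | hp
        exacts [hv.2.2 i j hij hp, hv.2.2 j i (Ne.symm hij) hp]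
      rw [ih (List.append_cancel_left h)]

lemma IsPrefixCode.isUDCode {v : Fin m → List X} (hv : IsPrefixCode v) : IsUDCode v :=
  fun _ _ _ _ h => hv.injective_flatten_map h

lemma IsUDCode.injective_flatten_map {v : Fin m → List X} (hv : IsUDCode v) :
    Function.Injective fun s : List (Fin m) => (s.map v).flatten := by
  have eq_nil : ∀ t : List (Fin m), (t.map v).flatten = [] → t = [] := by
    intro t ht
    by_contra hne
    have := hv (t ++ t) t (by simp [hne]) hne (by simp [ht])
    simp_all
  intro s t h
  rcases eq_or_ne s [] with rfl | hs
  · exact (eq_nil t h.symm).symm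
  rcases eq_or_ne t [] with rfl | ht
  · exact eq_nil s h
  exact hv s t hs ht h

lemma IsUDCode.sum_inv_pow_length_le_one [Fintype X] [Nonempty X] {v : Fin m → List X}
    (hv : IsUDCode v) : ∑ i, (Fintype.card X : ℝ)⁻¹ ^ (v i).length ≤ 1 := by
  have hinj := hv.injective_flatten_map
  have hvinj : Function.Injective v := fun i j h =>
    List.singleton_injective (hinj (a₁ := [i]) (a₂ := [j]) (by simpa using h))
  have hS :
      InformationTheory.UniquelyDecodable ((univ.map ⟨v, hvinj⟩ : Finset _) : Set (List X)) := by
    intro L₁ L₂ h₁ h₂ h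
    obtain ⟨s₁, rfl⟩ : L₁ ∈ Set.range (List.map v) := by
      rw [Set.range_list_map]
      simpa using h₁
    obtain ⟨s₂, rfl⟩ : L₂ ∈ Set.range (List.map v) := by
      rw [Set.range_list_map]
      simpa using h₂
    exact congrArg _ (hinj h)
  simpa [one_div] using InformationTheory.kraft_mcmillan_inequality hS

end Codes

section PrefixCodeCount

variable {n m : ℕ}

open Classical in
noncomputable def prefixCodes (n : ℕ) {m : ℕ} (L : Fin m → ℕ) : Finset (Fin m → List (Fin n)) :=
  {v ∈ Fintype.piFinset fun i => wordsOfLength (Fin n) (L i) | IsPrefixCode v}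

lemma mem_prefixCodes {L : Fin m → ℕ} {v : Fin m → List (Fin n)} :
    v ∈ prefixCodes n L ↔ (∀ i, (v i).length = L i) ∧ IsPrefixCode v := by
  simp [prefixCodes]

lemma coe_prefixCodes (L : Fin m → ℕ) :
    (prefixCodes n L : Set (Fin m → List (Fin n))) = PR n L := by
  ext v
  simp [mem_prefixCodes, PR]

lemma card_prefixCodes_comp_perm (L : Fin m → ℕ) (σ : Equiv.Perm (Fin m)) :
    #(prefixCodes n (L ∘ σ)) = #(prefixCodes n L) := by
  refine card_nbij' (· ∘ σ.symm) (· ∘ σ) (fun v hv => ?_) (fun v hv => ?_)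
    (fun v _ => by ext1; simp) (fun v _ => by ext1; simp)
  · simp only [mem_coe, mem_prefixCodes] at hv ⊢
    exact ⟨fun i => by simpa using hv.1 (σ.symm i), hv.2.comp σ.symm.injective⟩
  · simp only [mem_coe, mem_prefixCodes] at hv ⊢
    exact ⟨fun i => hv.1 (σ i), hv.2.comp σ.injective⟩

lemma sum_card_wordsAvoidingPrefixes_le_card_prefixCodes {L : Fin (m + 1) → ℕ}
    (hlast : ∀ i, L i ≤ L (Fin.last m)) (hpos : 1 ≤ L (Fin.last m)) :
    ∑ u ∈ prefixCodes n (L ∘ Fin.castSucc),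
        #(wordsAvoidingPrefixes u (L (Fin.last m))) ≤
      #(prefixCodes n L) := by
  rw [← card_sigma]
  refine card_le_card_of_injOn (fun p => Fin.snoc p.1 p.2) ?_ ?_
  · rintro ⟨u, w⟩ h
    simp only [coe_sigma, Set.mem_sigma_iff, mem_coe, mem_prefixCodes,
      mem_wordsAvoidingPrefixes, Function.comp_apply] at h ⊢
    obtain ⟨⟨hulen, hu⟩, hwlen, hw⟩ := h
    refine ⟨fun i => ?_, hu.snoc ?_ (fun j => ?_) hw⟩
    · cases i using Fin.lastCases <;> simp [hulen, hwlen]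
    · rw [← List.length_pos_iff, hwlen]
      exact hpos
    · rw [hulen, hwlen]
      exact hlast _
  · rintro ⟨u, w⟩ _ ⟨u', w'⟩ _ h
    have hinit := congrArg Fin.init h
    have hlast := congrFun h (Fin.last m)
    simp only [Fin.init_snoc, Fin.snoc_last] at hinit hlast
    subst hinit hlast
    rfl

lemma card_wordsAvoidingPrefixes_ge (hn : 0 < n) {ι : Type*} [Fintype ι] (u : ι → List (Fin n))
    {ℓ : ℕ} (hu : ∀ j, (u j).length ≤ ℓ) :
    (n : ℝ) ^ ℓ * (1 - ∑ j, (n : ℝ)⁻¹ ^ (u j).length) ≤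
      #(wordsAvoidingPrefixes u ℓ) := by
  have key := pow_le_card_wordsAvoidingPrefixes_add u ℓ
  simp only [Fintype.card_fin] at key
  have hcast : ((∑ j, n ^ (ℓ - (u j).length) : ℕ) : ℝ) =
      (n : ℝ) ^ ℓ * ∑ j, (n : ℝ)⁻¹ ^ (u j).length := by
    push_cast
    rw [mul_sum]
    refine sum_congr rfl fun j _ => ?_
    rw [pow_sub₀ _ (by positivity) (hu j), inv_pow]
  have := (Nat.cast_le (α := ℝ)).2 key
  rw [Nat.cast_add, hcast, Nat.cast_pow] at this
  linarith

end PrefixCodeCount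

lemma sum_inv_pow_le_one_sub_inv_pow {n : ℕ} (hn : 0 < n) {ι : Type*} {s : Finset ι}
    {b : ι → ℕ} {B : ℕ} (hb : ∀ j ∈ s, b j ≤ B) (hs : ∑ j ∈ s, (n : ℝ)⁻¹ ^ b j < 1) :
    ∑ j ∈ s, (n : ℝ)⁻¹ ^ b j ≤ 1 - (n : ℝ)⁻¹ ^ B := by
  have hB : (0 : ℝ) < (n : ℝ) ^ B := by positivity
  have hscale : (∑ j ∈ s, (n : ℝ)⁻¹ ^ b j) * (n : ℝ) ^ B = ((∑ j ∈ s, n ^ (B - b j) : ℕ) : ℝ) := by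
    push_cast
    rw [sum_mul]
    refine sum_congr rfl fun j hj => ?_
    rw [pow_sub₀ _ (by positivity) (hb j hj), inv_pow, mul_comm]
  have hlt : ∑ j ∈ s, n ^ (B - b j) < n ^ B := by
    have : ((∑ j ∈ s, n ^ (B - b j) : ℕ) : ℝ) < ((n ^ B : ℕ) : ℝ) := by
      rw [← hscale, Nat.cast_pow]
      exact (mul_lt_iff_lt_one_left hB).2 hs
    exact_mod_cast this
  have hle : ((∑ j ∈ s, n ^ (B - b j) : ℕ) : ℝ) + 1 ≤ (n : ℝ) ^ B := by exact_mod_cast hlt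
  rw [← mul_le_mul_iff_of_pos_right hB, hscale, sub_mul, one_mul, inv_pow, inv_mul_cancel₀ hB.ne']
  linarith

section Varsigma

variable {n : ℕ}

lemma varsigma_eq (k : ℕ) {r : ℕ} (hr : r < n - 1) :
    varsigma n ((n - 1) * k + r) = (n - r) / (n : ℝ) ^ (k + 1) := by
  rw [varsigma, Nat.mul_add_mod, Nat.mod_eq_of_lt hr, Nat.mul_add_div (by omega),
    Nat.div_eq_of_lt hr, add_zero]

lemma varsigma_zero (hn : n ≠ 0) : varsigma n 0 = 1 := by
  simp [varsigma, hn]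

lemma varsigma_pos (hn : 2 ≤ n) (t : ℕ) : 0 < varsigma n t := by
  have : t % (n - 1) < n := (Nat.mod_lt t (by omega)).trans (by omega)
  have : ((t % (n - 1) : ℕ) : ℝ) < n := by exact_mod_cast this
  unfold varsigma
  exact div_pos (by linarith) (by positivity)

lemma varsigma_le_inv_pow (hn : 2 ≤ n) (t : ℕ) : varsigma n t ≤ (n : ℝ)⁻¹ ^ (t / (n - 1)) := by
  have hn0 : (0 : ℝ) < n := by positivity
  rw [varsigma, inv_pow, div_le_iff₀ (by positivity), pow_succ, ← mul_assoc,
    inv_mul_cancel₀ (by positivity), one_mul]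
  linarith [(Nat.cast_nonneg (t % (n - 1)) : (0 : ℝ) ≤ _)]

lemma varsigma_eq_succ_add (hn : 2 ≤ n) (t : ℕ) :
    varsigma n t = varsigma n (t + 1) + (n : ℝ)⁻¹ ^ (t / (n - 1) + 1) := by
  obtain ⟨k, r, hr, rfl⟩ : ∃ k r, r < n - 1 ∧ t = (n - 1) * k + r :=
    ⟨_, _, Nat.mod_lt t (by omega), (Nat.div_add_mod t (n - 1)).symm⟩
  have hn0 : (n : ℝ) ≠ 0 := by positivity
  rw [Nat.mul_add_div (by omega), Nat.div_eq_of_lt hr, add_zero, varsigma_eq k hr, inv_pow]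
  rcases (Nat.succ_le_of_lt hr).lt_or_eq with hr' | hr'
  · rw [add_assoc, varsigma_eq k hr']
    push_cast
    field_simp
    ring
  · rw [show (n - 1) * k + r + 1 = (n - 1) * (k + 1) + 0 by rw [mul_add]; omega,
      varsigma_eq (k + 1) (by omega)]
    have : (r : ℝ) + 2 = n := by exact_mod_cast (by omega : r + 2 = n)
    rw [← this]
    field_simp
    ring

lemma varsigma_antitone (hn : 2 ≤ n) : Antitone (varsigma n) :=
  antitone_nat_of_succ_le fun t => by
    rw [varsigma_eq_succ_add hn t]
    exact le_add_of_nonneg_right (by positivity)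

lemma varsigma_succ_pow_le (hn : 2 ≤ n) (c : ℕ) :
    varsigma n (c + 1) ^ c ≤ varsigma n c ^ (c - 1) * varsigma n c := by
  cases c with
  | zero => simp [varsigma_zero (by omega : n ≠ 0)]
  | succ c =>
    rw [Nat.add_sub_cancel, ← pow_succ]
    exact pow_le_pow_left₀ (varsigma_pos hn _).le (varsigma_antitone hn (Nat.le_succ _)) _

lemma sum_inv_pow_add_varsigma_le_one (hn : 2 ≤ n) {ι : Type*} [DecidableEq ι] (b : ι → ℕ)
    (s : Finset ι) (hs : ∑ j ∈ s, (n : ℝ)⁻¹ ^ b j < 1) :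
    ∑ j ∈ s, (n : ℝ)⁻¹ ^ b j + varsigma n #s ≤ 1 := by
  induction s using Finset.induction_on_max_value b with
  | empty => simp [varsigma_zero (by omega : n ≠ 0)]
  | insert a s ha hmax ih =>
    have hinv : (n : ℝ)⁻¹ ≤ 1 := inv_le_one_of_one_le₀ (by exact_mod_cast (by omega : 1 ≤ n))
    rw [card_insert_of_notMem ha]
    rcases le_or_gt (#s / (n - 1) + 1) (b a) with hbig | hsmall
    · rw [sum_insert ha] at hs ⊢
      have ih := ih (by linarith [pow_pos (by positivity : (0 : ℝ) < (n : ℝ)⁻¹) (b a)])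
      have := varsigma_eq_succ_add hn #s
      have := pow_le_pow_of_le_one (by positivity) hinv hbig
      linarith
    · have hgap := sum_inv_pow_le_one_sub_inv_pow (by omega) (B := b a)
        (fun j hj => (mem_insert.1 hj).elim (fun h => h ▸ le_rfl) (hmax j)) hs
      have : varsigma n (#s + 1) ≤ (n : ℝ)⁻¹ ^ b a :=
        calc varsigma n (#s + 1) ≤ varsigma n #s := varsigma_antitone hn (Nat.le_succ _)
          _ ≤ (n : ℝ)⁻¹ ^ (#s / (n - 1)) := varsigma_le_inv_pow hn _
          _ ≤ (n : ℝ)⁻¹ ^ b a := pow_le_pow_of_le_one (by positivity) hinv (by omega)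
      linarith

end Varsigma

theorem varsigma_pow_mul_prod_le_card_prefixCodes {n : ℕ} (hn : 2 ≤ n) :
    ∀ {m : ℕ} (L : Fin m → ℕ), Monotone L → (∀ i, 1 ≤ L i) → ∑ i, (n : ℝ)⁻¹ ^ L i ≤ 1 →
      varsigma n m ^ (m - 1) * ∏ i, (n : ℝ) ^ L i ≤ #(prefixCodes n L)
  | 0, L, _, _, _ => by
    have : (fun i => i.elim0) ∈ prefixCodes n L :=
      mem_prefixCodes.2 ⟨fun i => i.elim0, fun i => i.elim0, fun i => i.elim0, fun i => i.elim0⟩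
    simpa using card_pos.2 ⟨_, this⟩
  | m + 1, L, hmono, hL, hK => by
    set L' := L ∘ Fin.castSucc
    set ℓ := L (Fin.last m)
    set K' := ∑ i, (n : ℝ)⁻¹ ^ L' i
    have hsplit : ∑ i, (n : ℝ)⁻¹ ^ L i = K' + (n : ℝ)⁻¹ ^ ℓ := Fin.sum_univ_castSucc _
    have hK' : K' < 1 := by
      rw [hsplit] at hK
      linarith [pow_pos (by positivity : (0 : ℝ) < (n : ℝ)⁻¹) ℓ]
    have ih := varsigma_pow_mul_prod_le_card_prefixCodes hn L'
      (hmono.comp (Fin.strictMono_castSucc (n := m)).monotone) (fun i => hL _) hK'.le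
    have hfactor : varsigma n m ≤ 1 - K' := by
      have := sum_inv_pow_add_varsigma_le_one hn L' univ hK'
      rw [card_univ, Fintype.card_fin] at this
      linarith
    have hext : ∀ u ∈ prefixCodes n L',
        (n : ℝ) ^ ℓ * (1 - K') ≤ #(wordsAvoidingPrefixes u ℓ) := by
      intro u hu
      have hlen := (mem_prefixCodes.1 hu).1
      simpa [hlen, K'] using card_wordsAvoidingPrefixes_ge (by omega) u
        (fun j => (hlen j).trans_le (hmono (Fin.le_last _)))
    calc varsigma n (m + 1) ^ (m + 1 - 1) * ∏ i, (n : ℝ) ^ L i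
        = varsigma n (m + 1) ^ m * ((∏ i, (n : ℝ) ^ L' i) * (n : ℝ) ^ ℓ) := by
          rw [Fin.prod_univ_castSucc, Nat.add_sub_cancel]
          rfl
      _ ≤ (varsigma n m ^ (m - 1) * (1 - K')) * ((∏ i, (n : ℝ) ^ L' i) * (n : ℝ) ^ ℓ) := by
          gcongr
          exact (varsigma_succ_pow_le hn m).trans
            (mul_le_mul_of_nonneg_left hfactor (pow_nonneg (varsigma_pos hn m).le _))
      _ = (varsigma n m ^ (m - 1) * ∏ i, (n : ℝ) ^ L' i) * ((n : ℝ) ^ ℓ * (1 - K')) := by ring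
      _ ≤ #(prefixCodes n L') * ((n : ℝ) ^ ℓ * (1 - K')) := by gcongr
      _ = ∑ _u ∈ prefixCodes n L', (n : ℝ) ^ ℓ * (1 - K') := by rw [sum_const, nsmul_eq_mul]
      _ ≤ ∑ u ∈ prefixCodes n L', (#(wordsAvoidingPrefixes u ℓ) : ℝ) := sum_le_sum hext
      _ ≤ #(prefixCodes n L) := by
          exact_mod_cast sum_card_wordsAvoidingPrefixes_le_card_prefixCodes
            (fun i => hmono (Fin.le_last i)) (hL _)

theorem varsigma_pow_le_rho {n m : ℕ} (hn : 2 ≤ n) (L : Fin m → ℕ) (hL : ∀ i, 1 ≤ L i)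
    (hUD : (UD n L).Nonempty) : varsigma n m ^ (m - 1) ≤ rho n L := by
  obtain ⟨v, hvlen, hv⟩ := hUD
  have : Nonempty (Fin n) := ⟨⟨0, by omega⟩⟩
  have hK : ∑ i, (n : ℝ)⁻¹ ^ L i ≤ 1 := by
    simpa [hvlen] using hv.sum_inv_pow_length_le_one
  have hsub : UD n L ⊆ ↑(Fintype.piFinset fun i => wordsOfLength (Fin n) (L i)) :=
    fun w hw => by simpa using hw.1
  have hUDcard : ((UD n L).ncard : ℝ) ≤ ∏ i, (n : ℝ) ^ L i := by
    have := Set.ncard_le_ncard hsub (finite_toSet _)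
    rw [Set.ncard_coe_finset, Fintype.card_piFinset] at this
    simpa [card_wordsOfLength] using (Nat.cast_le (α := ℝ)).2 this
  have hUDpos : (0 : ℝ) < (UD n L).ncard := by
    exact_mod_cast (Set.ncard_pos ((finite_toSet _).subset hsub)).2 ⟨v, hvlen, hv⟩
  set σ := Tuple.sort L
  have hPR := varsigma_pow_mul_prod_le_card_prefixCodes hn (L ∘ σ) (Tuple.monotone_sort L)
    (fun i => hL _) ((Equiv.sum_comp σ fun i => (n : ℝ)⁻¹ ^ L i).trans_le hK)
  have hprod : ∏ i, (n : ℝ) ^ (L ∘ σ) i = ∏ i, (n : ℝ) ^ L i :=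
    Equiv.prod_comp σ fun i => (n : ℝ) ^ L i
  rw [card_prefixCodes_comp_perm, hprod] at hPR
  rw [rho, ← coe_prefixCodes, Set.ncard_coe_finset, le_div_iff₀ hUDpos]
  calc varsigma n m ^ (m - 1) * (UD n L).ncard
      ≤ varsigma n m ^ (m - 1) * ∏ i, (n : ℝ) ^ L i :=
        mul_le_mul_of_nonneg_left hUDcard (pow_nonneg (varsigma_pos hn m).le _)
      _ ≤ #(prefixCodes n L) := hPR

lemma UD_nonempty_const {n : ℕ} (hn : 2 ≤ n) (m : ℕ) : (UD n fun _ : Fin m => m + 1).Nonempty := by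
  have hK : ∑ _i : Fin m, (n : ℝ)⁻¹ ^ (m + 1) ≤ 1 := by
    rw [sum_const, card_univ, Fintype.card_fin, nsmul_eq_mul, inv_pow, ← div_eq_mul_inv,
      div_le_one (by positivity)]
    have := Nat.lt_pow_self (n := m + 1) (by omega : 1 < n)
    exact_mod_cast (by omega : m ≤ n ^ (m + 1))
  have hpos : 0 < varsigma n m ^ (m - 1) * ∏ _i : Fin m, (n : ℝ) ^ (m + 1) := by
    have := varsigma_pos hn m
    positivity
  obtain ⟨v, hv⟩ := card_pos.1 <| Nat.cast_pos.1 <| hpos.trans_le <|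
    varsigma_pow_mul_prod_le_card_prefixCodes hn _ monotone_const (fun _ => by omega) hK
  obtain ⟨hvlen, hvpre⟩ := mem_prefixCodes.1 hv
  exact ⟨v, hvlen, hvpre.isUDCode⟩

theorem varsigma_pow_le_xi {n : ℕ} (hn : 2 ≤ n) (m : ℕ) : varsigma n m ^ (m - 1) ≤ xi n m :=
  le_csInf ⟨_, fun _ => m + 1, fun _ => Nat.le_add_left 1 m, UD_nonempty_const hn m, rfl⟩ <| by
    rintro _ ⟨L, hL, hUD, rfl⟩
    exact varsigma_pow_le_rho hn L hL hUD

lemma qnm_le_one (n m : ℕ) : qnm n m ≤ 1 := by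
  unfold qnm
  split_ifs
  · exact le_rfl
  · exact div_le_one_of_le₀ (by exact_mod_cast Nat.factorial_le_pow _) (by positivity)

theorem stmt3_general (n m : ℕ) (hn : 2 ≤ n) :
    qnm n m * varsigma n m ^ (m - 1) ≤ xi n m ∧ 0 < xi n m := by
  have hpos : 0 < varsigma n m ^ (m - 1) := pow_pos (varsigma_pos hn m) _
  have hxi := varsigma_pow_le_xi hn m
  exact ⟨(mul_le_of_le_one_left hpos.le (qnm_le_one n m)).trans hxi, hpos.trans_le hxi⟩

/-- Corollary 1: `ξ_{n,m} ≥ q_{n,m}·ς_{n,m}^{m-1}`; in particular `ξ_{n,m} > 0`. -/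
theorem stmt3 (n m : ℕ) (hn : 2 ≤ n) (hm : 1 ≤ m) :
    qnm n m * varsigma n m ^ (m - 1) ≤ xi n m ∧ 0 < xi n m :=
  stmt3_general n m hn
end

section
/- The sequence (ξ_{n,n})_{n ≥ 2} converges to 0 as n → ∞; in fact ξ_{n,n} ≤ 1/n for every n ≥ 2. -/
/-! Take the length distribution with `n - 1` words of length `1` and one word of length `k + 1`.
If the one-letter words are distinct and the long word contains the remaining letter `a`, the code
is uniquely decodable: the position of the first `a` in a message tells whether the message starts
with the long word. This gives at least `n! (n^(k+1) - (n-1)^(k+1))` uniquely decodable codes. A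
prefix code with these lengths is determined by its `n` distinct first letters and the last `k`
letters of the long word, so there are at most `n! n^k` of them. Hence
`ξ_{n,n} ≤ n^k / (n^(k+1) - (n-1)^(k+1))`, which tends to `1/n` as `k → ∞`. -/

open Finset Filter Topology

section UniquelyDecodable

variable {X I : Type*} [DecidableEq X] {v : I → List X} {c : I → X} {ℓ : I}

lemma idxOf_le_idxOf_flatten_map (hv : ∀ i ≠ ℓ, v i = [c i]) (hc : Function.Injective c)
    (hℓ : c ℓ ∈ v ℓ) :
    ∀ s : List I, c ℓ ∈ (s.map v).flatten →
      (v ℓ).idxOf (c ℓ) ≤ (s.map v).flatten.idxOf (c ℓ)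
  | [], h => by simp at h
  | i :: s, h => by
    by_cases hi : i = ℓ
    · subst hi
      simp [List.idxOf_append_of_mem hℓ]
    · have hne : c i ≠ c ℓ := hc.ne hi
      simp only [List.map_cons, List.flatten_cons, hv i hi, List.singleton_append,
        List.mem_cons, hne.symm, false_or] at h ⊢
      rw [List.idxOf_cons_ne _ hne]
      exact (idxOf_le_idxOf_flatten_map hv hc hℓ s h).trans (Nat.le_succ _)

lemma flatten_map_cons_ne (hv : ∀ i ≠ ℓ, v i = [c i]) (hc : Function.Injective c)
    (hℓ : c ℓ ∈ v ℓ) {i : I} (hi : i ≠ ℓ) (s t : List I) :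
    ((ℓ :: s).map v).flatten ≠ ((i :: t).map v).flatten := by
  intro h
  have hne : c i ≠ c ℓ := hc.ne hi
  have hmem : c ℓ ∈ ((i :: t).map v).flatten := h ▸ by simp [hℓ]
  simp only [List.map_cons, List.flatten_cons, hv i hi, List.singleton_append] at h hmem
  have hidx := congrArg (List.idxOf (c ℓ)) h
  rw [List.idxOf_append_of_mem hℓ, List.idxOf_cons_ne _ hne] at hidx
  have := idxOf_le_idxOf_flatten_map hv hc hℓ t (by simpa [hne.symm] using hmem)
  omega

lemma flatten_map_injective_of_singletons (hv : ∀ i ≠ ℓ, v i = [c i])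
    (hc : Function.Injective c) (hℓ : c ℓ ∈ v ℓ) :
    Function.Injective fun s : List I => (s.map v).flatten := by
  have hne : ∀ i, v i ≠ [] := fun i => by
    by_cases hi : i = ℓ
    · exact hi ▸ List.ne_nil_of_mem hℓ
    · simp [hv i hi]
  have head_eq : ∀ {i j : I} {s t : List I},
      ((i :: s).map v).flatten = ((j :: t).map v).flatten → i = j := by
    intro i j s t h
    by_cases hi : i = ℓ <;> by_cases hj : j = ℓ
    · rw [hi, hj]
    · exact absurd (hi ▸ h) (flatten_map_cons_ne hv hc hℓ hj s t)
    · exact absurd (hj ▸ h).symm (flatten_map_cons_ne hv hc hℓ hi t s)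
    · simp only [List.map_cons, List.flatten_cons, hv i hi, hv j hj, List.singleton_append,
        List.cons.injEq] at h
      exact hc h.1
  intro s t h
  induction s generalizing t with
  | nil => cases t <;> simp_all
  | cons i s ih =>
    cases t with
    | nil => simp_all
    | cons j t =>
      obtain rfl := head_eq h
      simp only [List.map_cons, List.flatten_cons, List.append_cancel_left_eq] at h
      rw [ih h]

lemma isUDCode_of_singletons {m : ℕ} {v : Fin m → List X} {c : Fin m → X} {ℓ : Fin m}
    (hv : ∀ i ≠ ℓ, v i = [c i]) (hc : Function.Injective c) (hℓ : c ℓ ∈ v ℓ) : IsUDCode v :=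
  fun _ _ _ _ h => flatten_map_injective_of_singletons hv hc hℓ h

end UniquelyDecodable

lemma Equiv.ext_of_forall_ne {α β : Type*} {e e' : α ≃ β} (a : α) (h : ∀ x ≠ a, e x = e' x) :
    e = e' := by
  refine Equiv.ext fun x => ?_
  by_cases hx : x = a
  · subst hx
    by_contra hne
    have hy : e.symm (e' x) ≠ x := fun hy => hne <| by
      simpa [hy] using e.apply_symm_apply (e' x)
    exact hy (e'.injective (by rw [← h _ hy, Equiv.apply_symm_apply]))
  · exact h x hx

lemma Fintype.card_subtype_mem_range {α β : Type*} [Fintype α] [DecidableEq α] [Fintype β]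
    [DecidableEq β] (a : α) :
    Fintype.card {f : β → α // a ∈ Set.range f} = card α ^ card β - (card α - 1) ^ card β := by
  have hcompl : Fintype.card {f : β → α // ∀ b, f b ≠ a} = (card α - 1) ^ card β := by
    rw [Fintype.card_congr (Equiv.subtypePiEquivPi (β := fun _ : β => α) (p := fun _ y => y ≠ a)),
      Fintype.card_pi]
    simp [Fintype.card_subtype_compl]
  have hiff : ∀ f : β → α, a ∈ Set.range f ↔ ¬ ∀ b, f b ≠ a := by simp
  rw [Fintype.card_congr (Equiv.subtypeEquivRight hiff), Fintype.card_subtype_compl, hcompl,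
    Fintype.card_fun]

lemma UD_finite {n m : ℕ} (L : Fin m → ℕ) : (UD n L).Finite :=
  (Set.Finite.pi' fun i => List.finite_length_eq (Fin n) (L i)).subset fun _ hv => hv.1

lemma IsPrefixCode.head_injective {X : Type*} {m : ℕ} {v : Fin m → List X} (hv : IsPrefixCode v)
    {ℓ : Fin m} (hlen : ∀ i ≠ ℓ, (v i).length = 1) :
    Function.Injective fun i => (v i).head (hv.2.1 i) := by
  suffices h : ∀ i j, i ≠ ℓ → i ≠ j → (v i).head (hv.2.1 i) ≠ (v j).head (hv.2.1 j) by
    intro i j hij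
    by_contra hne
    by_cases hi : i = ℓ
    · exact h j i (fun hj => hne (hi.trans hj.symm)) (Ne.symm hne) hij.symm
    · exact h i j hi hne hij
  intro i j hi hij hhead
  have hvi : v i = [(v i).head (hv.2.1 i)] := by
    obtain ⟨x, hx⟩ := List.length_eq_one_iff.1 (hlen i hi)
    simp [hx]
  refine hv.2.2 i j hij ⟨(v j).tail, ?_⟩
  rw [hvi, hhead, List.singleton_append, List.cons_head_tail]

lemma rho_nonneg (n : ℕ) {m : ℕ} (L : Fin m → ℕ) : 0 ≤ rho n L := by
  unfold rho
  positivity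

lemma xi_nonneg (n m : ℕ) : 0 ≤ xi n m :=
  Real.sInf_nonneg fun _ ⟨L, _, _, hr⟩ => hr ▸ rho_nonneg n L

lemma xi_le_rho {n m : ℕ} {L : Fin m → ℕ} (hL : ∀ i, 1 ≤ L i) (hUD : (UD n L).Nonempty) :
    xi n m ≤ rho n L :=
  csInf_le ⟨0, fun _ ⟨L, _, _, hr⟩ => hr ▸ rho_nonneg n L⟩ ⟨L, hL, hUD, rfl⟩

lemma tendsto_pow_div_pow_succ_sub_pow {x : ℝ} (hx : 1 ≤ x) :
    Tendsto (fun k : ℕ => x ^ k / (x ^ (k + 1) - (x - 1) ^ (k + 1))) atTop (𝓝 x⁻¹) := by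
  have hx0 : 0 < x := by linarith
  have hgeom : Tendsto (fun k : ℕ => ((x - 1) / x) ^ k) atTop (𝓝 0) :=
    tendsto_pow_atTop_nhds_zero_of_lt_one (div_nonneg (by linarith) hx0.le)
      ((div_lt_one hx0).2 (by linarith))
  have hden : Tendsto (fun k : ℕ => x - (x - 1) * ((x - 1) / x) ^ k) atTop (𝓝 x) := by
    simpa using (hgeom.const_mul (x - 1)).const_sub x
  refine (hden.inv₀ hx0.ne').congr fun k => ?_
  rw [div_pow]
  field_simp
  ring

section LongLengths

variable {n : ℕ} (ℓ : Fin n)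

def longLengths (k : ℕ) : Fin n → ℕ := fun i => if i = ℓ then k + 1 else 1

def longCode {k : ℕ} (e : Equiv.Perm (Fin n)) (w : Fin (k + 1) → Fin n) : Fin n → List (Fin n) :=
  fun i => if i = ℓ then List.ofFn (e ∘ w) else [e i]

variable {ℓ} {k : ℕ}

lemma longCode_mem_UD {e : Equiv.Perm (Fin n)} {w : Fin (k + 1) → Fin n} (hw : ℓ ∈ Set.range w) :
    longCode ℓ e w ∈ UD n (longLengths ℓ k) := by
  refine ⟨fun i => ?_, isUDCode_of_singletons (c := e) (ℓ := ℓ) (fun i hi => ?_) e.injective ?_⟩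
  · unfold longCode longLengths
    split_ifs <;> simp
  · simp [longCode, hi]
  · obtain ⟨t, rfl⟩ := hw
    simp only [longCode, if_true, List.mem_ofFn']
    exact ⟨t, rfl⟩

lemma longCode_injective :
    Function.Injective fun p : Equiv.Perm (Fin n) × {w : Fin (k + 1) → Fin n // ℓ ∈ Set.range w} =>
      longCode ℓ p.1 p.2.1 := by
  rintro ⟨e, w, _⟩ ⟨e', w', _⟩ h
  have he : e = e' := Equiv.ext_of_forall_ne ℓ fun i hi => by
    simpa [longCode, hi] using congrFun h i
  subst he
  have hw : e ∘ w = e ∘ w' := List.ofFn_injective (by simpa [longCode] using congrFun h ℓ)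
  simp [e.injective.comp_left hw]

lemma ncard_UD_longLengths_ge :
    n.factorial * (n ^ (k + 1) - (n - 1) ^ (k + 1)) ≤ (UD n (longLengths ℓ k)).ncard := by
  have hcard : Nat.card (Equiv.Perm (Fin n) × {w : Fin (k + 1) → Fin n // ℓ ∈ Set.range w}) =
      n.factorial * (n ^ (k + 1) - (n - 1) ^ (k + 1)) := by
    rw [Nat.card_eq_fintype_card, Fintype.card_prod, Fintype.card_perm,
      Fintype.card_subtype_mem_range]
    simp
  rw [← hcard, ← Set.ncard_univ]
  exact Set.ncard_le_ncard_of_injOn _ (fun p _ => longCode_mem_UD p.2.2)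
    longCode_injective.injOn (UD_finite _)

lemma ncard_PR_longLengths_le : (PR n (longLengths ℓ k)).ncard ≤ n.factorial * n ^ k := by
  have hlen : ∀ v ∈ PR n (longLengths ℓ k), ∀ i ≠ ℓ, (v i).length = 1 := fun v hv i hi => by
    simpa [longLengths, hi] using hv.1 i
  let Φ : PR n (longLengths ℓ k) → (Fin n ↪ Fin n) × List.Vector (Fin n) k := fun v =>
    (⟨_, v.2.2.head_injective (hlen v v.2)⟩, ⟨(v.1 ℓ).tail, by simp [v.2.1 ℓ, longLengths]⟩)
  have hΦ : Function.Injective Φ := by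
    rintro ⟨v, hv⟩ ⟨v', hv'⟩ h
    obtain ⟨hhead, htail⟩ := Prod.mk.inj h
    refine Subtype.ext (funext fun i => ?_)
    change v i = v' i
    rw [← List.cons_head_tail (hv.2.2.1 i), ← List.cons_head_tail (hv'.2.2.1 i)]
    congr 1
    · exact DFunLike.congr_fun hhead i
    by_cases hi : i = ℓ
    · rw [hi]
      exact congrArg Subtype.val htail
    · simp [List.eq_nil_of_length_eq_zero, hlen v hv i hi, hlen v' hv' i hi]
  calc (PR n (longLengths ℓ k)).ncard
      = Nat.card (PR n (longLengths ℓ k)) := (Nat.card_coe_set_eq _).symm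
    _ ≤ Nat.card ((Fin n ↪ Fin n) × List.Vector (Fin n) k) := Nat.card_le_card_of_injective Φ hΦ
    _ = n.factorial * n ^ k := by
      rw [Nat.card_eq_fintype_card, Fintype.card_prod, Fintype.card_embedding_eq, card_vector]
      simp [Nat.descFactorial_self]

lemma rho_longLengths_le :
    rho n (longLengths ℓ k) ≤ (n : ℝ) ^ k / ((n : ℝ) ^ (k + 1) - ((n : ℝ) - 1) ^ (k + 1)) := by
  have hn : 1 ≤ n := ℓ.pos
  have hlt : (n - 1) ^ (k + 1) < n ^ (k + 1) := Nat.pow_lt_pow_left (by omega) (by omega)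
  have hQ : (((n ^ (k + 1) - (n - 1) ^ (k + 1) : ℕ)) : ℝ) =
      (n : ℝ) ^ (k + 1) - ((n : ℝ) - 1) ^ (k + 1) := by
    push_cast [Nat.cast_sub hlt.le, Nat.cast_sub hn]
    rfl
  have hfac : (0 : ℝ) < n.factorial := by exact_mod_cast n.factorial_pos
  calc rho n (longLengths ℓ k)
      ≤ ((n.factorial * n ^ k : ℕ) : ℝ) /
          ((n.factorial * (n ^ (k + 1) - (n - 1) ^ (k + 1)) : ℕ) : ℝ) :=
        div_le_div₀ (by positivity) (by exact_mod_cast ncard_PR_longLengths_le)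
          (by exact_mod_cast Nat.mul_pos n.factorial_pos (Nat.sub_pos_of_lt hlt))
          (by exact_mod_cast ncard_UD_longLengths_ge)
    _ = (n : ℝ) ^ k / ((n : ℝ) ^ (k + 1) - ((n : ℝ) - 1) ^ (k + 1)) := by
      rw [Nat.cast_mul, Nat.cast_mul, mul_div_mul_left _ _ hfac.ne', hQ, Nat.cast_pow]

end LongLengths

lemma xi_self_le_inv {n : ℕ} (hn : 0 < n) : xi n n ≤ (n : ℝ)⁻¹ := by
  let ℓ : Fin n := ⟨0, hn⟩
  have hUD : ∀ k, (UD n (longLengths ℓ k)).Nonempty := fun k =>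
    ⟨_, longCode_mem_UD (e := 1) (w := fun _ => ℓ) ⟨0, rfl⟩⟩
  have hL : ∀ k, ∀ i, 1 ≤ longLengths ℓ k i := fun k i => by
    unfold longLengths
    split_ifs <;> omega
  refine ge_of_tendsto (tendsto_pow_div_pow_succ_sub_pow (by exact_mod_cast hn))
    (Eventually.of_forall fun k => ?_)
  exact (xi_le_rho (hL k) (hUD k)).trans rho_longLengths_le

/-- Corollary 2: `ξ_{n,n} ≤ 1/n` for every `n ≥ 2`, and `ξ_{n,n} → 0` as `n → ∞`. -/
theorem stmt10 :
    (∀ n : ℕ, 2 ≤ n → xi n n ≤ 1 / (n : ℝ)) ∧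
      Filter.Tendsto (fun n : ℕ => xi n n) Filter.atTop (𝓝 0) := by
  have hle : ∀ n : ℕ, 2 ≤ n → xi n n ≤ 1 / (n : ℝ) := fun n hn =>
    (one_div (n : ℝ)).symm ▸ xi_self_le_inv (by omega)
  exact ⟨hle, squeeze_zero' (Eventually.of_forall fun n => xi_nonneg n n)
    ((eventually_ge_atTop 2).mono hle) tendsto_one_div_atTop_nhds_zero_nat⟩
end
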